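/- Let S ⊆ ℝ² be a finite set with |S| = n and K ⊆ ℝ² a finite set with |K| ≤ 3 and S ∩ K = ∅. Let s, s' be natural numbers with s = 2s', s' ≥ 4, s ≤ n, and set p = s/n. For an affinely independent triple u of points of S ∪ K, let b_u = |{q ∈ S ∪ K : dist(c(u), q) < ρ(u)}| and define the excess t_u = b_u · s/n; say u is active in W if u ⊆ W and B_u ∩ W = ∅. Let R be a uniformly random s-element subset of S and R' a uniformly random s'-element subset of S. Then E[ Σ_{u active in R ∪ K} t_u · ln(t_u) ] ≤ 64 · (Σ_{i=0}^{∞} e^{−i/2}(i+1)²) · E[ number of triples u active in R' ∪ K ], where the first sum ranges over active triples u with t_u ≥ 1 and ln denotes the natural logarithm. -/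

import Mathlib

/-!
Fix a triple `u` with `a ≤ 3` points outside `K` and `b` points in conflict with it. It is active
in `R ∪ K` exactly when `R` contains those `a` points and avoids the `b` conflicting ones, which
happens for `C(n - b - a, k - a)` of the `k`-subsets `R` of `S`. The identity
`C(N, s - a) C(s - a, s' - a) = C(N, s' - a) C(n - b - s', s')`, where `N = n - b - a`, writes the
probability for `k = s` as the one for `k = s'` times two factors: the chance of avoiding the `b`
points with `s'` further draws, at most `(1 - s'/n)^b ≤ e^{-t/2}` for `t = b s / n`, and
`C(s, s') / C(s - a, s' - a) ≤ 4^a ≤ 64`. Finally `t log t e^{-t/2}` is bounded by the term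
`i = ⌊t⌋` of the series.
-/

open scoped Classical
open Finset Real

lemma summable_exp_neg_half_mul_add_one_sq :
    Summable fun i : ℕ => exp (-(i : ℝ) / 2) * ((i : ℝ) + 1) ^ 2 := by
  have h (k : ℕ) := summable_pow_mul_exp_neg_nat_mul k (r := 1 / 2) (by norm_num)
  refine (((h 2).add ((h 1).mul_left 2)).add (h 0)).congr fun i => ?_
  ring_nf

lemma mul_log_mul_exp_neg_half_le_tsum {t : ℝ} (ht : 1 ≤ t) :
    t * log t * exp (-t / 2) ≤ ∑' i : ℕ, exp (-(i : ℝ) / 2) * ((i : ℝ) + 1) ^ 2 := by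
  have hi : (⌊t⌋₊ : ℝ) ≤ t := Nat.floor_le (by linarith)
  have hi' : t < ⌊t⌋₊ + 1 := Nat.lt_floor_add_one t
  have hlog : log t ≤ t := (log_le_sub_one_of_pos (by linarith)).trans (by linarith)
  have hlog0 : 0 ≤ log t := log_nonneg ht
  calc t * log t * exp (-t / 2) ≤ ((⌊t⌋₊ : ℝ) + 1) ^ 2 * exp (-(⌊t⌋₊ : ℝ) / 2) := by
        gcongr
        nlinarith
    _ = exp (-(⌊t⌋₊ : ℝ) / 2) * ((⌊t⌋₊ : ℝ) + 1) ^ 2 := mul_comm _ _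
    _ ≤ _ := summable_exp_neg_half_mul_add_one_sq.le_tsum _ fun j _ => by positivity

lemma Nat.choose_le_four_mul_choose_pred {x y : ℕ} (hy : 0 < y) (h : x ≤ 4 * y) :
    x.choose y ≤ 4 * (x - 1).choose (y - 1) := by
  obtain ⟨j, rfl⟩ := Nat.exists_eq_add_one_of_ne_zero hy.ne'
  rcases x with _ | m
  · simp
  refine Nat.le_of_mul_le_mul_right (c := j + 1) ?_ j.succ_pos
  calc (m + 1).choose (j + 1) * (j + 1) = (m + 1) * m.choose j := (m.add_one_mul_choose_eq j).symm
    _ ≤ 4 * (j + 1) * m.choose j := Nat.mul_le_mul_right _ h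
    _ = 4 * m.choose j * (j + 1) := by ring

lemma Nat.choose_two_mul_le_four_pow_mul_choose {m a : ℕ} (hm : 3 ≤ m) (ha : a ≤ 3) :
    (2 * m).choose m ≤ 4 ^ a * (2 * m - a).choose (m - a) := by
  induction a with
  | zero => simp
  | succ a ih =>
    calc (2 * m).choose m ≤ 4 ^ a * (2 * m - a).choose (m - a) := ih (by omega)
      _ ≤ 4 ^ a * (4 * (2 * m - a - 1).choose (m - a - 1)) := by
        gcongr; exact Nat.choose_le_four_mul_choose_pred (by omega) (by omega)
      _ = 4 ^ (a + 1) * (2 * m - (a + 1)).choose (m - (a + 1)) := by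
        rw [Nat.sub_sub, Nat.sub_sub]; ring

lemma Nat.cast_choose_pred_le_one_sub_div_mul {k M n : ℕ} (hkM : k ≤ M) (hMn : M ≤ n) :
    ((M - 1).choose k : ℝ) ≤ (1 - k / n) * M.choose k := by
  rcases M with _ | m
  · obtain rfl : k = 0 := by omega
    simp
  have hm : (0 : ℝ) < m + 1 := by positivity
  have e : (m.choose k : ℝ) * (m + 1) = (m + 1).choose k * (m + 1 - k) := by
    exact_mod_cast m.choose_mul_succ_eq k
  calc ((m + 1 - 1).choose k : ℝ) = (1 - k / (m + 1)) * (m + 1).choose k := by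
        rw [Nat.add_sub_cancel]
        field_simp
        linarith
    _ ≤ (1 - k / n) * (m + 1).choose k := by
        gcongr
        exact_mod_cast hMn

lemma Nat.cast_choose_sub_le_exp_mul {k b M n : ℕ} (h : k + b ≤ M) (hMn : M ≤ n) :
    ((M - b).choose k : ℝ) ≤ exp (-(k * b / n)) * M.choose k := by
  induction b generalizing M with
  | zero => simp
  | succ b ih =>
    calc ((M - (b + 1)).choose k : ℝ) = ((M - 1 - b).choose k : ℝ) := by
          rw [Nat.sub_sub, add_comm 1]
      _ ≤ exp (-(k * b / n)) * (M - 1).choose k := ih (by omega) (by omega)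
      _ ≤ exp (-(k * b / n)) * ((1 - k / n) * M.choose k) := by
          gcongr; exact Nat.cast_choose_pred_le_one_sub_div_mul (by omega) hMn
      _ ≤ exp (-(k * b / n)) * (exp (-(k / n)) * M.choose k) := by
          gcongr; exact one_sub_le_exp_neg _
      _ = exp (-(k * (b + 1 : ℕ) / n)) * M.choose k := by
          rw [← mul_assoc, ← exp_add]; push_cast; ring_nf

lemma Nat.cast_choose_div_choose_le_exp_mul {n s s' a b : ℕ} (hs : s = 2 * s') (hs' : 3 ≤ s')
    (hsn : s ≤ n) (ha : a ≤ 3) :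
    ((n - b - a).choose (s - a) : ℝ) / n.choose s ≤
      64 * exp (-(b * s / n) / 2) * ((n - b - a).choose (s' - a) / n.choose s') := by
  rcases Nat.eq_zero_or_pos ((n - b - a).choose (s - a)) with h0 | hpos
  · rw [h0, Nat.cast_zero, zero_div]; positivity
  have hle : s - a ≤ n - b - a := by
    by_contra h; exact hpos.ne' (Nat.choose_eq_zero_of_lt (by omega))
  have e₁ : n.choose s * s.choose s' = n.choose s' * (n - s').choose s' := by
    rw [Nat.choose_mul (by omega), show s - s' = s' by omega]
  have e₂ : (n - b - a).choose (s - a) * (s - a).choose (s' - a) =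
      (n - b - a).choose (s' - a) * (n - s' - b).choose s' := by
    rw [Nat.choose_mul (by omega), show n - b - a - (s' - a) = n - s' - b by omega,
      show s - a - (s' - a) = s' by omega]
  have hE : (0 : ℝ) < (n - s').choose s' := by exact_mod_cast Nat.choose_pos (by omega)
  have hP : (0 : ℝ) < (s - a).choose (s' - a) := by exact_mod_cast Nat.choose_pos (by omega)
  have hn : (0 : ℝ) < n.choose s := by exact_mod_cast Nat.choose_pos hsn
  have hn' : (0 : ℝ) < n.choose s' := by exact_mod_cast Nat.choose_pos (by omega)
  have avoid : ((n - s' - b).choose s' : ℝ) ≤ exp (-(b * s / n) / 2) * (n - s').choose s' := by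
    convert Nat.cast_choose_sub_le_exp_mul (k := s') (b := b) (M := n - s') (n := n)
      (by omega) tsub_le_self using 3
    subst hs; push_cast; ring
  have halve : (s.choose s' : ℝ) ≤ 64 * (s - a).choose (s' - a) := by
    have h4 : 4 ^ a ≤ 64 := (Nat.pow_le_pow_right (by norm_num) ha).trans_eq (by norm_num)
    subst hs
    exact_mod_cast (Nat.choose_two_mul_le_four_pow_mul_choose hs' ha).trans (by gcongr)
  calc ((n - b - a).choose (s - a) : ℝ) / n.choose s
      = (n - b - a).choose (s' - a) / n.choose s' * ((n - s' - b).choose s' / (n - s').choose s')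
          * (s.choose s' / (s - a).choose (s' - a)) := by
        have e₁' : (n.choose s * s.choose s' : ℝ) = n.choose s' * (n - s').choose s' := by
          exact_mod_cast e₁
        have e₂' : ((n - b - a).choose (s - a) * (s - a).choose (s' - a) : ℝ) =
            (n - b - a).choose (s' - a) * (n - s' - b).choose s' := by exact_mod_cast e₂
        field_simp
        linear_combination (n.choose s' * (n - s').choose s' : ℝ) * e₂' -
          ((n - b - a).choose (s' - a) * (n - s' - b).choose s' : ℝ) * e₁'
    _ ≤ (n - b - a).choose (s' - a) / n.choose s' * exp (-(b * s / n) / 2) * 64 := by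
        gcongr
        · exact (div_le_iff₀ hE).mpr avoid
        · exact (div_le_iff₀ hP).mpr (by linarith)
    _ = _ := by ring

lemma Finset.card_filter_powersetCard_subset_union_inter_eq_empty {α : Type*} [DecidableEq α]
    {S K u B : Finset α} (hu : u ⊆ S ∪ K) (hB : B ⊆ S ∪ K) (huB : Disjoint u B)
    (hBK : B ∩ K = ∅) {k : ℕ} (hk : #(u \ K) ≤ k) :
    #{R ∈ S.powersetCard k | u ⊆ R ∪ K ∧ B ∩ (R ∪ K) = ∅} =
      (#S - #B - #(u \ K)).choose (k - #(u \ K)) := by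
  rw [← disjoint_iff_inter_eq_empty] at hBK
  have hBS : B ⊆ S := by
    intro x hx
    exact (mem_union.1 (hB hx)).resolve_right (disjoint_left.1 hBK hx)
  have hsdiff (R : Finset α) : u \ K ⊆ R ↔ u ⊆ R ∪ K := sdiff_le_iff'
  have huSB : u \ K ⊆ S \ B :=
    subset_sdiff.2 ⟨(hsdiff S).2 hu, disjoint_of_subset_left sdiff_subset huB⟩
  have hfilter : {R ∈ S.powersetCard k | u ⊆ R ∪ K ∧ B ∩ (R ∪ K) = ∅} =
      {R ∈ (S \ B).powersetCard k | u \ K ⊆ R} := by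
    ext R
    simp only [mem_filter, mem_powersetCard, subset_sdiff, hsdiff,
      ← disjoint_iff_inter_eq_empty, disjoint_union_right, hBK, and_true, disjoint_comm (a := R)]
    tauto
  rw [hfilter, card_filter_powersetCard_subset _ _ _ huSB hk, card_sdiff_of_subset hBS]

lemma Finset.sum_sum_filter_eq_sum_card_filter_nsmul {ι κ M : Type*} [AddCommMonoid M]
    (X : Finset ι) (Y : Finset κ) (p : ι → κ → Prop) [∀ i j, Decidable (p i j)] (f : κ → M) :
    ∑ i ∈ X, ∑ j ∈ Y with p i j, f j = ∑ j ∈ Y, #{i ∈ X | p i j} • f j := by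
  rw [sum_comm' (t' := Y) (s' := fun j => {i ∈ X | p i j}) (by simp; tauto)]
  simp only [sum_const]

lemma card_active_mul_excess_entropy_div_le {α : Type*} [DecidableEq α] {S K u B : Finset α}
    {s s' : ℕ} (hu : u ⊆ S ∪ K) (hu3 : #(u \ K) ≤ 3) (hB : B ⊆ S ∪ K) (huB : Disjoint u B)
    (hs : s = 2 * s') (hs' : 3 ≤ s') (hsS : s ≤ #S) (ht : 1 ≤ (#B : ℝ) * s / #S) :
    (#{R ∈ S.powersetCard s | u ⊆ R ∪ K ∧ B ∩ (R ∪ K) = ∅} : ℝ) *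
        ((#B : ℝ) * s / #S * log ((#B : ℝ) * s / #S)) / ((#S).choose s : ℝ) ≤
      64 * (∑' i : ℕ, exp (-(i : ℝ) / 2) * ((i : ℝ) + 1) ^ 2) *
        ((#{R ∈ S.powersetCard s' | u ⊆ R ∪ K ∧ B ∩ (R ∪ K) = ∅} : ℝ) / ((#S).choose s' : ℝ)) := by
  set t : ℝ := #B * s / #S
  have htlog : 0 ≤ t * log t := mul_nonneg (by linarith) (log_nonneg ht)
  by_cases hBK : B ∩ K = ∅
  · rw [card_filter_powersetCard_subset_union_inter_eq_empty hu hB huB hBK (by omega),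
      card_filter_powersetCard_subset_union_inter_eq_empty hu hB huB hBK (by omega)]
    calc _ = t * log t * ((#S - #B - #(u \ K)).choose (s - #(u \ K)) / ((#S).choose s : ℝ)) := by
          ring
      _ ≤ t * log t * (64 * exp (-t / 2) *
            ((#S - #B - #(u \ K)).choose (s' - #(u \ K)) / ((#S).choose s' : ℝ))) := by
          gcongr; exact Nat.cast_choose_div_choose_le_exp_mul hs hs' hsS hu3
      _ = 64 * (t * log t * exp (-t / 2)) *
            ((#S - #B - #(u \ K)).choose (s' - #(u \ K)) / ((#S).choose s' : ℝ)) := by ring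
      _ ≤ _ := by gcongr; exact mul_log_mul_exp_neg_half_le_tsum ht
  · have hempty : {R ∈ S.powersetCard s | u ⊆ R ∪ K ∧ B ∩ (R ∪ K) = ∅} = ∅ :=
      filter_eq_empty_iff.2 fun R _ hR =>
        hBK (subset_empty.1 (hR.2 ▸ inter_subset_inter_left subset_union_right))
    rw [hempty, card_empty, Nat.cast_zero, zero_mul, zero_div]
    positivity

theorem expected_excess_entropy_le {α : Type*} [DecidableEq α] (S K : Finset α) (s s' : ℕ)
    (h2 : s = 2 * s') (hs' : 3 ≤ s') (hsn : s ≤ #S)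
    (B : Finset α → Finset α) (hB : ∀ u, B u ⊆ S ∪ K) (good : Finset α → Prop)
    (huB : ∀ u ∈ (S ∪ K).powersetCard 3, good u → Disjoint u (B u)) :
    (∑ R ∈ S.powersetCard s,
        ∑ u ∈ (S ∪ K).powersetCard 3 with
            good u ∧ u ⊆ R ∪ K ∧ B u ∩ (R ∪ K) = ∅ ∧ 1 ≤ (#(B u) : ℝ) * s / #S,
          (#(B u) : ℝ) * s / #S * log ((#(B u) : ℝ) * s / #S)) / #(S.powersetCard s)
    ≤ 64 * (∑' i : ℕ, exp (-(i : ℝ) / 2) * ((i : ℝ) + 1) ^ 2) *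
      ((∑ R' ∈ S.powersetCard s',
          (#{u ∈ (S ∪ K).powersetCard 3 | good u ∧ u ⊆ R' ∪ K ∧ B u ∩ (R' ∪ K) = ∅} : ℝ)) /
        #(S.powersetCard s')) := by
  have hR := sum_sum_filter_eq_sum_card_filter_nsmul (S.powersetCard s') ((S ∪ K).powersetCard 3)
    (fun R' u => good u ∧ u ⊆ R' ∪ K ∧ B u ∩ (R' ∪ K) = ∅) fun _ => (1 : ℝ)
  simp only [sum_const, nsmul_one] at hR
  rw [sum_sum_filter_eq_sum_card_filter_nsmul, hR, card_powersetCard, card_powersetCard, sum_div,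
    sum_div, mul_sum]
  refine sum_le_sum fun u hu => ?_
  obtain ⟨huSK, hu3⟩ := mem_powersetCard.1 hu
  by_cases hg : good u ∧ 1 ≤ (#(B u) : ℝ) * s / #S
  · simp only [hg, true_and, and_true, nsmul_eq_mul]
    exact card_active_mul_excess_entropy_div_le huSK ((card_le_card sdiff_subset).trans hu3.le)
      (hB u) (huB u hu hg.1) h2 hs' hsn hg.2
  · rw [filter_false_of_mem fun R _ hR => hg ⟨hR.1, hR.2.2.2⟩, card_empty, zero_smul, zero_div]
    positivity

theorem expected_excess_entropy_bound_general
    (S K : Finset (EuclideanSpace ℝ (Fin 2))) (n s s' : ℕ)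
    (hS : S.card = n)
    (h2 : s = 2 * s') (hs' : 4 ≤ s') (hsn : s ≤ n)
    (c : Finset (EuclideanSpace ℝ (Fin 2)) → EuclideanSpace ℝ (Fin 2))
    (ρ : Finset (EuclideanSpace ℝ (Fin 2)) → ℝ)
    (hc : ∀ u ∈ (S ∪ K).powersetCard 3,
      AffineIndependent ℝ (fun x : u => (x : EuclideanSpace ℝ (Fin 2))) →
      ∀ q ∈ u, dist (c u) q = ρ u) :
    (∑ R ∈ S.powersetCard s,
        ∑ u ∈ ((S ∪ K).powersetCard 3).filter (fun (u : Finset (EuclideanSpace ℝ (Fin 2))) =>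
            AffineIndependent ℝ (fun x : u => (x : EuclideanSpace ℝ (Fin 2))) ∧
            u ⊆ R ∪ K ∧
            ((S ∪ K).filter (fun q => dist (c u) q < ρ u)) ∩ (R ∪ K) = ∅ ∧
            1 ≤ (((S ∪ K).filter (fun q => dist (c u) q < ρ u)).card : ℝ) * (s : ℝ) / (n : ℝ)),
          ((((S ∪ K).filter (fun q => dist (c u) q < ρ u)).card : ℝ) * (s : ℝ) / (n : ℝ)) *
            Real.log ((((S ∪ K).filter (fun q => dist (c u) q < ρ u)).card : ℝ) *
              (s : ℝ) / (n : ℝ))) /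
      ((S.powersetCard s).card : ℝ)
    ≤ 64 * (∑' i : ℕ, Real.exp (-(i : ℝ) / 2) * ((i : ℝ) + 1) ^ 2) *
      ((∑ R' ∈ S.powersetCard s',
          ((((S ∪ K).powersetCard 3).filter (fun (u : Finset (EuclideanSpace ℝ (Fin 2))) =>
            AffineIndependent ℝ (fun x : u => (x : EuclideanSpace ℝ (Fin 2))) ∧
            u ⊆ R' ∪ K ∧
            ((S ∪ K).filter (fun q => dist (c u) q < ρ u)) ∩ (R' ∪ K) = ∅)).card : ℝ)) /
        ((S.powersetCard s').card : ℝ)) := by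
  subst hS
  exact expected_excess_entropy_le S K s s' h2 (by omega) hsn
    (fun u => (S ∪ K).filter fun q => dist (c u) q < ρ u) (fun _ => filter_subset _ _)
    (fun u => AffineIndependent ℝ (fun x : u => (x : EuclideanSpace ℝ (Fin 2))))
    fun u hu haff => disjoint_left.2 fun q hq hqB => (mem_filter.1 hqB).2.ne (hc u hu haff q hq)

/-- Lemma 7 of the paper. The expected total excess-entropy
`Σ t_u ln t_u` over all affinely independent triples `u` of `S ∪ K` with
excess `t_u = b_u·s/n ≥ 1` that are active in `R ∪ K` is at most
`64 · Σ_i e^{-i/2}(i+1)²` times the expected number of active triples for a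
half-size sample `R'`. Here `c u` and `ρ u` denote the circumcenter and
circumradius of the triple `u`, and expectations over a uniformly random
`s`- (resp. `s'`-) subset are expressed as averages over `S.powersetCard s`
(resp. `S.powersetCard s'`). -/
theorem expected_excess_entropy_bound
    (S K : Finset (EuclideanSpace ℝ (Fin 2))) (n s s' : ℕ)
    (hS : S.card = n) (hK : K.card ≤ 3) (hSK : S ∩ K = ∅)
    (h2 : s = 2 * s') (hs' : 4 ≤ s') (hsn : s ≤ n)
    (c : Finset (EuclideanSpace ℝ (Fin 2)) → EuclideanSpace ℝ (Fin 2))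
    (ρ : Finset (EuclideanSpace ℝ (Fin 2)) → ℝ)
    (hc : ∀ u ∈ (S ∪ K).powersetCard 3,
      AffineIndependent ℝ (fun x : u => (x : EuclideanSpace ℝ (Fin 2))) →
      ∀ q ∈ u, dist (c u) q = ρ u) :
    (∑ R ∈ S.powersetCard s,
        ∑ u ∈ ((S ∪ K).powersetCard 3).filter (fun (u : Finset (EuclideanSpace ℝ (Fin 2))) =>
            AffineIndependent ℝ (fun x : u => (x : EuclideanSpace ℝ (Fin 2))) ∧
            u ⊆ R ∪ K ∧
            ((S ∪ K).filter (fun q => dist (c u) q < ρ u)) ∩ (R ∪ K) = ∅ ∧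
            1 ≤ (((S ∪ K).filter (fun q => dist (c u) q < ρ u)).card : ℝ) * (s : ℝ) / (n : ℝ)),
          ((((S ∪ K).filter (fun q => dist (c u) q < ρ u)).card : ℝ) * (s : ℝ) / (n : ℝ)) *
            Real.log ((((S ∪ K).filter (fun q => dist (c u) q < ρ u)).card : ℝ) *
              (s : ℝ) / (n : ℝ))) /
      ((S.powersetCard s).card : ℝ)
    ≤ 64 * (∑' i : ℕ, Real.exp (-(i : ℝ) / 2) * ((i : ℝ) + 1) ^ 2) *
      ((∑ R' ∈ S.powersetCard s',
          ((((S ∪ K).powersetCard 3).filter (fun (u : Finset (EuclideanSpace ℝ (Fin 2))) =>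
            AffineIndependent ℝ (fun x : u => (x : EuclideanSpace ℝ (Fin 2))) ∧
            u ⊆ R' ∪ K ∧
            ((S ∪ K).filter (fun q => dist (c u) q < ρ u)) ∩ (R' ∪ K) = ∅)).card : ℝ)) /
        ((S.powersetCard s').card : ℝ)) :=
  expected_excess_entropy_bound_general S K n s s' hS h2 hs' hsn c ρ hc
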